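/- arXiv:2504.02795 — 2 statements merged into one kernel-verified Lean document; each statement's English description precedes it below -/
import Mathlib

section
/- For the greedy partition γ_3 (block-length d = 3): (1) every part has size 3 or size 1; (2) the smallest elements of the parts of size 3 are exactly the elements of M = {4^i·9^j·k : i, j ≥ 0, k ∈ ℕ+, gcd(k, 6) = 1}; (3) the singleton parts are exactly the sets {6m} with m ∈ M. -/
/-- `greedyPrim d n` is the smallest element (the "primitive") of the part of the
greedy partition `γ_d` containing `n` (and `0` for `n = 0`).  A positive integer `n`
joins the part headed by the least `k` such that `n = m·k` with `m ≤ d` and the part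
headed by `k` currently equals `{k, 2k, …, (m-1)k}`; `k = n` always qualifies, starting
a new part. -/
noncomputable def greedyPrim (d : ℕ) : ℕ → ℕ := fun n =>
  Nat.strongRecOn n (fun n ih =>
    if n = 0 then 0 else
    sInf {k | 0 < k ∧ k ∣ n ∧ n / k ≤ d ∧
      ∀ m, ∀ hm : m < n, (k ≤ m → k ∣ m → ih m hm = k)})

/-- The part of the greedy partition `γ_d` headed by the primitive `k`. -/
def greedyPart (d : ℕ) (k : ℕ) : Set ℕ := {m | greedyPrim d m = k}

/-- The set `M = {4^i · 9^j · k : gcd(k,6) = 1}`. -/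
def M3 : Set ℕ := {m | ∃ i j k : ℕ, Nat.gcd k 6 = 1 ∧ m = 4 ^ i * 9 ^ j * k}

lemma greedyPrim_eq (d n : ℕ) : greedyPrim d n =
    if n = 0 then 0 else
    sInf {k | 0 < k ∧ k ∣ n ∧ n / k ≤ d ∧
      ∀ m, m < n → k ≤ m → k ∣ m → greedyPrim d m = k} := by
  conv_lhs => rw [greedyPrim]
  rw [Nat.strongRecOn_eq]
  rfl


section F3
/-- Conjectured explicit formula for `greedyPrim 3`. -/
def f3 (n : ℕ) : ℕ :=
  if Odd (n.factorization 2) ∧ Even (n.factorization 3) then n / 2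
  else if Even (n.factorization 2) ∧ Odd (n.factorization 3) then n / 3
  else n

lemma fact_div_two (n : ℕ) (h : 2 ∣ n) :
    (n/2).factorization 2 = n.factorization 2 - 1 ∧
    (n/2).factorization 3 = n.factorization 3 := by
  rw [Nat.factorization_div h]
  simp [Nat.Prime.factorization Nat.prime_two]

lemma fact_div_three (n : ℕ) (h : 3 ∣ n) :
    (n/3).factorization 2 = n.factorization 2 ∧
    (n/3).factorization 3 = n.factorization 3 - 1 := by
  rw [Nat.factorization_div h]
  simp [Nat.Prime.factorization Nat.prime_three]

lemma fact_two_mul (k : ℕ) (hk : k ≠ 0) :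
    (2*k).factorization 2 = k.factorization 2 + 1 ∧
    (2*k).factorization 3 = k.factorization 3 := by
  rw [Nat.factorization_mul two_ne_zero hk]
  simp [Nat.Prime.factorization Nat.prime_two, add_comm]

lemma fact_three_mul (k : ℕ) (hk : k ≠ 0) :
    (3*k).factorization 2 = k.factorization 2 ∧
    (3*k).factorization 3 = k.factorization 3 + 1 := by
  rw [Nat.factorization_mul three_ne_zero hk]
  simp [Nat.Prime.factorization Nat.prime_three, add_comm]

lemma two_dvd_of_odd_fact (n : ℕ) (h : Odd (n.factorization 2)) : 2 ∣ n := by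
  by_contra hd
  rw [Nat.factorization_eq_zero_of_not_dvd hd] at h
  simp at h

lemma three_dvd_of_odd_fact (n : ℕ) (h : Odd (n.factorization 3)) : 3 ∣ n := by
  by_contra hd
  rw [Nat.factorization_eq_zero_of_not_dvd hd] at h
  simp at h

lemma f3_zero : f3 0 = 0 := by simp [f3]

lemma f3_le (n : ℕ) : f3 n ≤ n := by
  unfold f3; split_ifs <;> first | exact Nat.div_le_self _ _ | rfl

lemma f3_eq_self_iff (n : ℕ) (hn : n ≠ 0) :
    f3 n = n ↔ (Even (n.factorization 2) ↔ Even (n.factorization 3)) := by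
  unfold f3
  split_ifs with h1 h2
  · have h2d : 2 ∣ n := two_dvd_of_odd_fact n h1.1
    have : n / 2 < n := Nat.div_lt_self (Nat.pos_of_ne_zero hn) one_lt_two
    constructor
    · intro h; omega
    · intro h
      rw [← Nat.not_even_iff_odd] at h1
      tauto
  · have h3d : 3 ∣ n := three_dvd_of_odd_fact n h2.2
    have : n / 3 < n := Nat.div_lt_self (Nat.pos_of_ne_zero hn) (by norm_num)
    constructor
    · intro h; omega
    · intro h
      rw [← Nat.not_even_iff_odd] at h2
      tauto
  · simp only [eq_self_iff_true, true_iff]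
    rw [← Nat.not_even_iff_odd] at h1 h2
    tauto

lemma f3_two_mul_iff (k : ℕ) (hk : k ≠ 0) :
    f3 (2*k) = k ↔ (Even (k.factorization 2) ∧ Even (k.factorization 3)) := by
  obtain ⟨e2, e3⟩ := fact_two_mul k hk
  unfold f3
  rw [e2, e3]
  have hkpos : 0 < k := Nat.pos_of_ne_zero hk
  split_ifs with h1 h2
  · rw [Nat.mul_div_cancel_left k two_pos]
    constructor
    · intro _
      refine ⟨?_, h1.2⟩
      rcases h1.1 with ⟨r, hr⟩
      exact ⟨r, by omega⟩
    · intro _; rfl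
  · -- f3 (2k) = 2k/3 here; show 2k/3 ≠ k and the RHS fails
    have hlt : 2*k/3 < k := Nat.div_lt_of_lt_mul (by omega)
    constructor
    · intro h; omega
    · rintro ⟨ha, hb⟩
      rcases ha with ⟨r, hr⟩
      exact absurd ⟨⟨r, by omega⟩ , hb⟩ h1
  · constructor
    · intro h; omega
    · rintro ⟨ha, hb⟩
      rcases ha with ⟨r, hr⟩
      exact absurd ⟨⟨r, by omega⟩, hb⟩ h1


lemma f3_three_mul_iff (k : ℕ) (hk : k ≠ 0) :
    f3 (3*k) = k ↔ (Even (k.factorization 2) ∧ Even (k.factorization 3)) := by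
  obtain ⟨e2, e3⟩ := fact_three_mul k hk
  unfold f3
  rw [e2, e3]
  have hkpos : 0 < k := Nat.pos_of_ne_zero hk
  split_ifs with h1 h2
  · -- Odd v2 k; 3k/2 = k impossible: 2 ∣ k so 3k/2 = k ↔ 3k = 2k
    have h2d : 2 ∣ k := two_dvd_of_odd_fact k h1.1
    have h2d' : 2 ∣ 3*k := Dvd.dvd.mul_left h2d 3
    constructor
    · intro h
      have : 3*k = k*2 := (Nat.div_eq_iff_eq_mul_left two_pos h2d').1 h
      omega
    · rintro ⟨ha, _⟩
      rw [← Nat.not_even_iff_odd] at h1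
      exact absurd ha h1.1
  · rw [Nat.mul_div_cancel_left k three_pos]
    constructor
    · intro _
      refine ⟨h2.1, ?_⟩
      rcases h2.2 with ⟨r, hr⟩
      exact ⟨r, by omega⟩
    · intro _; rfl
  · constructor
    · intro h; omega
    · rintro ⟨ha, hb⟩
      rcases hb with ⟨r, hr⟩
      exact absurd ⟨ha, ⟨r, by omega⟩⟩ h2

lemma f3_eq_cases (m k : ℕ) (h : f3 m = k) : m = k ∨ m = 2*k ∨ m = 3*k := by
  unfold f3 at h
  split_ifs at h with h1 h2
  · have h2d : 2 ∣ m := two_dvd_of_odd_fact m h1.1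
    right; left; omega
  · have h3d : 3 ∣ m := three_dvd_of_odd_fact m h2.2
    right; right; omega
  · left; exact h

lemma prim_eq_f3 : ∀ n, greedyPrim 3 n = f3 n := by
  intro n
  induction n using Nat.strong_induction_on with
  | _ n ih =>
  rw [greedyPrim_eq]
  rcases eq_or_ne n 0 with rfl | h0
  · simp [f3_zero]
  rw [if_neg h0]
  have hnpos : 0 < n := Nat.pos_of_ne_zero h0
  have hset : {k | 0 < k ∧ k ∣ n ∧ n / k ≤ 3 ∧
      ∀ m, m < n → k ≤ m → k ∣ m → greedyPrim 3 m = k}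
      = {k | 0 < k ∧ k ∣ n ∧ n / k ≤ 3 ∧
      ∀ m, m < n → k ≤ m → k ∣ m → f3 m = k} := by
    ext k
    simp only [Set.mem_setOf_eq]
    constructor
    · rintro ⟨h1, h2, h3, h4⟩
      exact ⟨h1, h2, h3, fun m hm ha hb => (ih m hm).symm.trans (h4 m hm ha hb)⟩
    · rintro ⟨h1, h2, h3, h4⟩
      exact ⟨h1, h2, h3, fun m hm ha hb => (ih m hm).trans (h4 m hm ha hb)⟩
  rw [hset]
  have hmem : f3 n ∈ {k | 0 < k ∧ k ∣ n ∧ n / k ≤ 3 ∧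
      ∀ m, m < n → k ≤ m → k ∣ m → f3 m = k} := by
    by_cases hA : Odd (n.factorization 2) ∧ Even (n.factorization 3)
    · have h2d : 2 ∣ n := two_dvd_of_odd_fact n hA.1
      have hval : f3 n = n / 2 := by unfold f3; rw [if_pos hA]
      have hn2 : 2 ≤ n := Nat.le_of_dvd hnpos h2d
      obtain ⟨e2, e3⟩ := fact_div_two n h2d
      have hpos : 0 < n / 2 := Nat.div_pos hn2 two_pos
      rw [hval]
      refine ⟨hpos, Nat.div_dvd_of_dvd h2d, ?_, ?_⟩
      · rw [Nat.div_div_self h2d h0]; norm_num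
      · intro m hm hle hdvd
        have hn' : n = n / 2 * 2 := (Nat.div_mul_cancel h2d).symm
        obtain ⟨c, hc⟩ := hdvd
        have hm2 : m = n / 2 := by
          have hcge : 1 ≤ c := by
            rcases Nat.eq_zero_or_pos c with rfl | h
            · rw [hc] at hle; omega
            · exact h
          rw [hc] at hm
          have := lt_of_mul_lt_mul_left (hm.trans_eq hn') (Nat.zero_le _)
          interval_cases c
          · omega
        rw [hm2, f3_eq_self_iff _ hpos.ne', e2, e3]
        simp only [Nat.even_iff, Nat.odd_iff] at hA ⊢
        omega
    · by_cases hB : Even (n.factorization 2) ∧ Odd (n.factorization 3)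
      · have h3d : 3 ∣ n := three_dvd_of_odd_fact n hB.2
        have hval : f3 n = n / 3 := by unfold f3; rw [if_neg hA, if_pos hB]
        have hn3 : 3 ≤ n := Nat.le_of_dvd hnpos h3d
        obtain ⟨e2, e3⟩ := fact_div_three n h3d
        have hpos : 0 < n / 3 := Nat.div_pos hn3 three_pos
        rw [hval]
        refine ⟨hpos, Nat.div_dvd_of_dvd h3d, ?_, ?_⟩
        · rw [Nat.div_div_self h3d h0]
        · intro m hm hle hdvd
          have hn' : n = n / 3 * 3 := (Nat.div_mul_cancel h3d).symm
          obtain ⟨c, hc⟩ := hdvd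
          have hcge : 1 ≤ c := by
            rcases Nat.eq_zero_or_pos c with rfl | h
            · rw [hc] at hle; omega
            · exact h
          have hclt : c < 3 := by
            rw [hc] at hm
            exact lt_of_mul_lt_mul_left (hm.trans_eq hn') (Nat.zero_le _)
          interval_cases c
          · rw [hc, mul_one, f3_eq_self_iff _ hpos.ne', e2, e3]
            simp only [Nat.even_iff, Nat.odd_iff] at hB ⊢
            omega
          · rw [hc, mul_comm, f3_two_mul_iff _ hpos.ne', e2, e3]
            simp only [Nat.even_iff, Nat.odd_iff] at hB ⊢
            omega
      · have hval : f3 n = n := by unfold f3; rw [if_neg hA, if_neg hB]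
        rw [hval]
        refine ⟨hnpos, dvd_rfl, ?_, ?_⟩
        · rw [Nat.div_self hnpos]; norm_num
        · intro m hm hle _; omega
  apply le_antisymm (Nat.sInf_le hmem)
  apply le_csInf ⟨_, hmem⟩
  rintro k ⟨hk0, hkdvd, hk3, hcond⟩
  obtain ⟨c, hc⟩ := hkdvd
  have hcval : n / k = c := by rw [hc]; exact Nat.mul_div_cancel_left c hk0
  have hc3 : c ≤ 3 := hcval ▸ hk3
  have hc1 : 1 ≤ c := by
    rcases Nat.eq_zero_or_pos c with rfl | h
    · rw [mul_zero] at hc; omega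
    · exact h
  interval_cases c
  · have := f3_le n; omega
  · -- n = 2k
    have h2d : 2 ∣ n := ⟨k, by omega⟩
    obtain ⟨e2, e3⟩ := fact_div_two n h2d
    have hk_eq : k = n / 2 := by omega
    by_cases hA : Odd (n.factorization 2) ∧ Even (n.factorization 3)
    · have hval : f3 n = n / 2 := by unfold f3; rw [if_pos hA]
      omega
    · by_cases hB : Even (n.factorization 2) ∧ Odd (n.factorization 3)
      · have hval : f3 n = n / 3 := by unfold f3; rw [if_neg hA, if_pos hB]
        have : n / 3 ≤ n / 2 := Nat.div_le_div_left (by norm_num) (by norm_num)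
        omega
      · exfalso
        have hkc : f3 k = k := hcond k (by omega) le_rfl dvd_rfl
        have hfe := (f3_eq_self_iff k hk0.ne').1 hkc
        rw [hk_eq, e2, e3] at hfe
        have ha1 : 1 ≤ n.factorization 2 :=
          (Nat.Prime.dvd_iff_one_le_factorization Nat.prime_two h0).1 h2d
        simp only [Nat.even_iff, Nat.odd_iff] at hA hB hfe
        omega
  · -- n = 3k
    have h3d : 3 ∣ n := ⟨k, by omega⟩
    obtain ⟨e2, e3⟩ := fact_div_three n h3d
    have hk_eq : k = n / 3 := by omega
    by_cases hB : Even (n.factorization 2) ∧ Odd (n.factorization 3)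
    · have hnA : ¬(Odd (n.factorization 2) ∧ Even (n.factorization 3)) := by
        simp only [Nat.even_iff, Nat.odd_iff] at hB ⊢
        omega
      have hval : f3 n = n / 3 := by unfold f3; rw [if_neg hnA, if_pos hB]
      omega
    · exfalso
      have h2k : f3 (2*k) = k := hcond (2*k) (by omega) (by omega) ⟨2, by ring⟩
      have hpar := (f3_two_mul_iff k hk0.ne').1 h2k
      rw [hk_eq, e2, e3] at hpar
      have hb1 : 1 ≤ n.factorization 3 :=
        (Nat.Prime.dvd_iff_one_le_factorization Nat.prime_three h0).1 h3d
      apply hB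
      simp only [Nat.even_iff, Nat.odd_iff] at hpar ⊢
      omega

end F3

lemma greedyPart_eq (k : ℕ) : greedyPart 3 k = {m | f3 m = k} := by
  ext m; simp [greedyPart, prim_eq_f3]

lemma part_triple (k : ℕ) (hk : k ≠ 0)
    (h2 : Even (k.factorization 2)) (h3 : Even (k.factorization 3)) :
    greedyPart 3 k = {k, 2*k, 3*k} := by
  rw [greedyPart_eq]; ext m
  simp only [Set.mem_setOf_eq, Set.mem_insert_iff, Set.mem_singleton_iff]
  constructor
  · exact f3_eq_cases m k
  · rintro (rfl | rfl | rfl)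
    · exact (f3_eq_self_iff m hk).2 (iff_of_true h2 h3)
    · exact (f3_two_mul_iff k hk).2 ⟨h2, h3⟩
    · exact (f3_three_mul_iff k hk).2 ⟨h2, h3⟩

lemma part_single (k : ℕ) (hk : k ≠ 0)
    (h2 : Odd (k.factorization 2)) (h3 : Odd (k.factorization 3)) :
    greedyPart 3 k = {k} := by
  rw [greedyPart_eq]; ext m
  simp only [Set.mem_setOf_eq, Set.mem_singleton_iff]
  constructor
  · intro h
    rcases f3_eq_cases m k h with rfl | rfl | rfl
    · rfl
    · exfalso
      have h' := (f3_two_mul_iff k hk).1 h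
      simp only [Nat.even_iff, Nat.odd_iff] at h' h2
      omega
    · exfalso
      have h' := (f3_three_mul_iff k hk).1 h
      simp only [Nat.even_iff, Nat.odd_iff] at h' h3
      omega
  · rintro rfl
    exact (f3_eq_self_iff m hk).2
      (iff_of_false (Nat.not_even_iff_odd.2 h2) (Nat.not_even_iff_odd.2 h3))

lemma mem_M3_iff (m : ℕ) :
    m ∈ M3 ↔ m ≠ 0 ∧ Even (m.factorization 2) ∧ Even (m.factorization 3) := by
  constructor
  · rintro ⟨i, j, k, hk, rfl⟩
    have hk0 : k ≠ 0 := by rintro rfl; simp [Nat.gcd_zero_left] at hk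
    have h2k : ¬ (2 ∣ k) := fun h => by
      have : (2:ℕ) ∣ 1 := hk ▸ Nat.dvd_gcd h (by norm_num)
      norm_num at this
    have h3k : ¬ (3 ∣ k) := fun h => by
      have : (3:ℕ) ∣ 1 := hk ▸ Nat.dvd_gcd h (by norm_num)
      norm_num at this
    have e4 : (4:ℕ)^i = 2^(2*i) := by rw [pow_mul]; norm_num
    have e9 : (9:ℕ)^j = 3^(2*j) := by rw [pow_mul]; norm_num
    have hne1 : (4:ℕ)^i ≠ 0 := by positivity
    have hne2 : (9:ℕ)^j ≠ 0 := by positivity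
    refine ⟨by positivity, ?_, ?_⟩ <;>
    · rw [Nat.factorization_mul (mul_ne_zero hne1 hne2) hk0,
        Nat.factorization_mul hne1 hne2, e4, e9]
      simp [Nat.Prime.factorization_pow,
        Nat.factorization_eq_zero_of_not_dvd h2k,
        Nat.factorization_eq_zero_of_not_dvd h3k, Finsupp.single_apply,
        Nat.Prime.factorization Nat.prime_two,
        Nat.Prime.factorization Nat.prime_three, Nat.even_iff]
  · rintro ⟨hm, ⟨i, hi⟩, ⟨j, hj⟩⟩
    have hmpos : 0 < m := Nat.pos_of_ne_zero hm
    set a := m.factorization 2 with ha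
    set b := m.factorization 3 with hb
    have hpd : 2^a ∣ m := Nat.ordProj_dvd m 2
    set m1 := m / 2^a with hm1
    have hm1ne : m1 ≠ 0 :=
      (Nat.div_pos (Nat.le_of_dvd hmpos hpd) (pow_pos two_pos a)).ne'
    have hf1 : m1.factorization = m.factorization.erase 2 :=
      Nat.factorization_ordCompl m 2
    have h3m1 : m1.factorization 3 = b := by
      rw [hf1, Finsupp.erase_ne (by norm_num)]
    have hqd : 3^b ∣ m1 := by
      have := Nat.ordProj_dvd m1 3
      rwa [h3m1] at this
    set k := m1 / 3^b with hkdef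
    have hkne : k ≠ 0 :=
      (Nat.div_pos (Nat.le_of_dvd (Nat.pos_of_ne_zero hm1ne) hqd)
        (pow_pos three_pos b)).ne'
    have hf2 : k.factorization = m1.factorization.erase 3 := by
      have := Nat.factorization_ordCompl m1 3
      rwa [h3m1] at this
    have h2k : k.factorization 2 = 0 := by
      rw [hf2, Finsupp.erase_ne (by norm_num), hf1, Finsupp.erase_same]
    have h3k : k.factorization 3 = 0 := by
      rw [hf2, Finsupp.erase_same]
    have h2nd : ¬ (2 ∣ k) := fun h => by
      have := (Nat.Prime.dvd_iff_one_le_factorization Nat.prime_two hkne).1 h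
      omega
    have h3nd : ¬ (3 ∣ k) := fun h => by
      have := (Nat.Prime.dvd_iff_one_le_factorization Nat.prime_three hkne).1 h
      omega
    have hcop : Nat.gcd k 6 = 1 := by
      have c2 : Nat.Coprime k 2 := (Nat.prime_two.coprime_iff_not_dvd.2 h2nd).symm
      have c3 : Nat.Coprime k 3 := (Nat.prime_three.coprime_iff_not_dvd.2 h3nd).symm
      have : Nat.Coprime k (2*3) := Nat.Coprime.mul_right c2 c3
      simpa using this
    refine ⟨i, j, k, hcop, ?_⟩
    have hm1eq : m = 2^a * m1 := (Nat.mul_div_cancel' hpd).symm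
    have hkeq : m1 = 3^b * k := (Nat.mul_div_cancel' hqd).symm
    have e4 : (4:ℕ)^i = 2^a := by
      rw [hi, pow_add, ← mul_pow]; norm_num
    have e9 : (9:ℕ)^j = 3^b := by
      rw [hj, pow_add, ← mul_pow]; norm_num
    rw [e4, e9, mul_assoc, ← hkeq, ← hm1eq]


/-- For the greedy partition `γ_3`: every part has size `3` or `1`; the heads of the
parts of size `3` are exactly `M = {4^i 9^j k : gcd(k,6)=1}`; the singleton parts are
exactly the `{6m}` for `m ∈ M`. -/
theorem greedy3_parts :
    (∀ k, 0 < k → greedyPrim 3 k = k →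
      (greedyPart 3 k).ncard = 3 ∨ (greedyPart 3 k).ncard = 1) ∧
    {k | 0 < k ∧ greedyPrim 3 k = k ∧ (greedyPart 3 k).ncard = 3} = M3 ∧
    {k | 0 < k ∧ greedyPrim 3 k = k ∧ (greedyPart 3 k).ncard = 1} = (6 * ·) '' M3 := by
  have head_iff : ∀ k : ℕ, k ≠ 0 →
      (greedyPrim 3 k = k ↔ (Even (k.factorization 2) ↔ Even (k.factorization 3))) :=
    fun k hk => by rw [prim_eq_f3]; exact f3_eq_self_iff k hk
  have ncard3 : ∀ k : ℕ, k ≠ 0 → Even (k.factorization 2) → Even (k.factorization 3) →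
      (greedyPart 3 k).ncard = 3 := by
    intro k hk h2 h3
    rw [part_triple k hk h2 h3, Set.ncard_eq_three]
    exact ⟨k, 2*k, 3*k, by omega, by omega, by omega, rfl⟩
  have ncard1 : ∀ k : ℕ, k ≠ 0 → Odd (k.factorization 2) → Odd (k.factorization 3) →
      (greedyPart 3 k).ncard = 1 := by
    intro k hk h2 h3
    rw [part_single k hk h2 h3]
    exact Set.ncard_singleton k
  refine ⟨?_, ?_, ?_⟩
  · intro k hk hhead
    have hiff := (head_iff k hk.ne').1 hhead
    by_cases h2 : Even (k.factorization 2)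
    · exact Or.inl (ncard3 k hk.ne' h2 (hiff.1 h2))
    · exact Or.inr (ncard1 k hk.ne' (Nat.not_even_iff_odd.1 h2)
        (Nat.not_even_iff_odd.1 (fun h => h2 (hiff.2 h))))
  · ext k
    simp only [Set.mem_setOf_eq]
    rw [mem_M3_iff]
    constructor
    · rintro ⟨hk, hhead, hn3⟩
      have hiff := (head_iff k hk.ne').1 hhead
      by_cases h2 : Even (k.factorization 2)
      · exact ⟨hk.ne', h2, hiff.1 h2⟩
      · exfalso
        have := ncard1 k hk.ne' (Nat.not_even_iff_odd.1 h2)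
          (Nat.not_even_iff_odd.1 (fun h => h2 (hiff.2 h)))
        omega
    · rintro ⟨hk, h2, h3⟩
      exact ⟨Nat.pos_of_ne_zero hk, (head_iff k hk).2 (iff_of_true h2 h3),
        ncard3 k hk h2 h3⟩
  · ext x
    simp only [Set.mem_setOf_eq, Set.mem_image]
    constructor
    · rintro ⟨hx, hhead, hn1⟩
      have hiff := (head_iff x hx.ne').1 hhead
      by_cases h2 : Even (x.factorization 2)
      · exfalso
        have := ncard3 x hx.ne' h2 (hiff.1 h2)
        omega
      · have ho2 : Odd (x.factorization 2) := Nat.not_even_iff_odd.1 h2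
        have ho3 : Odd (x.factorization 3) :=
          Nat.not_even_iff_odd.1 (fun h => h2 (hiff.2 h))
        have h2d : 2 ∣ x := two_dvd_of_odd_fact x ho2
        obtain ⟨e2, e3⟩ := fact_div_two x h2d
        have hx2 : x / 2 ≠ 0 :=
          (Nat.div_pos (Nat.le_of_dvd hx h2d) two_pos).ne'
        have h3d : 3 ∣ x / 2 := three_dvd_of_odd_fact _ (by rw [e3]; exact ho3)
        obtain ⟨f2', f3'⟩ := fact_div_three (x/2) h3d
        have hq : x / 2 / 3 ≠ 0 :=
          (Nat.div_pos (Nat.le_of_dvd (Nat.pos_of_ne_zero hx2) h3d) three_pos).ne'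
        refine ⟨x / 2 / 3, ?_, ?_⟩
        · rw [mem_M3_iff]
          refine ⟨hq, ?_, ?_⟩
          · rw [f2', e2]
            simp only [Nat.even_iff, Nat.odd_iff] at ho2 ⊢
            omega
          · rw [f3', e3]
            simp only [Nat.even_iff, Nat.odd_iff] at ho3 ⊢
            omega
        · show 6 * (x / 2 / 3) = x
          calc 6 * (x / 2 / 3) = 2 * (3 * (x / 2 / 3)) := by ring
            _ = 2 * (x / 2) := by rw [Nat.mul_div_cancel' h3d]
            _ = x := Nat.mul_div_cancel' h2d
    · rintro ⟨m, hm, rfl⟩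
      rw [mem_M3_iff] at hm
      obtain ⟨hm0, h2, h3⟩ := hm
      have h3m : (3 : ℕ) * m ≠ 0 := mul_ne_zero three_ne_zero hm0
      have h6 : (6 : ℕ) * m = 2 * (3 * m) := by ring
      have v2e : (6*m).factorization 2 = m.factorization 2 + 1 := by
        rw [h6, (fact_two_mul (3*m) h3m).1, (fact_three_mul m hm0).1]
      have v3e : (6*m).factorization 3 = m.factorization 3 + 1 := by
        rw [h6, (fact_two_mul (3*m) h3m).2, (fact_three_mul m hm0).2]
      have h60 : (6 : ℕ) * m ≠ 0 := by positivity
      have ho2 : Odd ((6*m).factorization 2) := by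
        rw [v2e]; exact h2.add_one
      have ho3 : Odd ((6*m).factorization 3) := by
        rw [v3e]; exact h3.add_one
      exact ⟨Nat.pos_of_ne_zero h60,
        (head_iff _ h60).2 (iff_of_false (Nat.not_even_iff_odd.2 ho2)
          (Nat.not_even_iff_odd.2 ho3)),
        ncard1 _ h60 ho2 ho3⟩
end

section
/- Let p be a prime and let M = sift({p}). Then M and pM are disjoint with M ∪ pM = ℕ+, and M has natural density 1/(1 + 1/p) = p/(p + 1). -/
/-- Membership in the selective sifting of `S`: `0 < n`, and `n` cannot be written as
`n = a·b` with `a ∈ S` and `b` itself in the selective sifting (necessarily `b < n`). -/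
def siftMem (S : Set ℕ) : ℕ → Prop := fun n =>
  Nat.strongRecOn n (fun n ih =>
    0 < n ∧ ¬ ∃ a ∈ S, ∃ b, ∃ hb : b < n, ih b hb ∧ n = a * b)

/-- The selective sifting `sift S ⊆ ℕ+`. -/
def sift (S : Set ℕ) : Set ℕ := {n | siftMem S n}

/-- `S ⊆ ℕ+` has natural (asymptotic) density `c`:
`#{s ∈ S : 1 ≤ s ≤ N} / N → c` as `N → ∞`. -/
def hasDensity (S : Set ℕ) (c : ℝ) : Prop :=
  Filter.Tendsto (fun N : ℕ => ((S ∩ Set.Icc 1 N).ncard : ℝ) / N)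
    Filter.atTop (nhds c)

open Filter

theorem siftMem_iff' (S : Set ℕ) (n : ℕ) :
    siftMem S n ↔ 0 < n ∧ ¬ ∃ a ∈ S, ∃ b, b < n ∧ siftMem S b ∧ n = a * b := by
  rw [siftMem, Nat.strongRecOn_eq]
  simp only [exists_prop]
  rfl

variable {p : ℕ}

theorem mem_sift_iff' (hp : 2 ≤ p) (n : ℕ) :
    n ∈ sift {p} ↔ 0 < n ∧ ¬ ∃ b ∈ sift {p}, n = p * b := by
  simp only [sift, Set.mem_setOf_eq]
  rw [siftMem_iff']
  constructor
  · rintro ⟨h1, h2⟩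
    refine ⟨h1, fun ⟨b, hb, he⟩ => h2 ⟨p, rfl, b, ?_, hb, he⟩⟩
    have hb1 : 0 < b := ((siftMem_iff' _ b).mp hb).1
    subst he; nlinarith
  · rintro ⟨h1, h2⟩
    refine ⟨h1, fun ⟨a, ha, b, _, hb, he⟩ => h2 ⟨b, hb,
      by rw [Set.mem_singleton_iff] at ha; rwa [ha] at he⟩⟩

theorem sift_pos' (hp : 2 ≤ p) {n : ℕ} (hn : n ∈ sift {p}) : 0 < n :=
  ((mem_sift_iff' hp n).mp hn).1

theorem sift_disjoint' (hp : 2 ≤ p) :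
    Disjoint (sift {p}) ((p * ·) '' sift {p}) := by
  rw [Set.disjoint_left]
  rintro n hn ⟨m, hm, rfl⟩
  exact ((mem_sift_iff' hp _).mp hn).2 ⟨m, hm, rfl⟩

theorem sift_union' (hp : 2 ≤ p) :
    sift {p} ∪ (p * ·) '' sift {p} = {n | 0 < n} := by
  ext n
  simp only [Set.mem_union, Set.mem_image, Set.mem_setOf_eq]
  constructor
  · rintro (h | ⟨m, hm, rfl⟩)
    · exact sift_pos' hp h
    · have := sift_pos' hp hm; positivity
  · intro hn
    by_cases h : n ∈ sift {p}
    · exact Or.inl h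
    · right
      rw [mem_sift_iff' hp] at h
      push_neg at h
      obtain ⟨b, hb, he⟩ := h hn
      exact ⟨b, hb, he.symm⟩

noncomputable def siftCount (p N : ℕ) : ℕ := ((sift {p}) ∩ Set.Icc 1 N).ncard

theorem siftCount_finite (p N : ℕ) : ((sift {p}) ∩ Set.Icc 1 N).Finite :=
  (Set.finite_Icc 1 N).inter_of_right _

theorem siftCount_rec (hp : 2 ≤ p) (N : ℕ) :
    siftCount p N + siftCount p (N / p) = N := by
  have hp0 : 0 < p := by omega
  have himg : ((p * ·) '' sift {p}) ∩ Set.Icc 1 N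
      = (p * ·) '' ((sift {p}) ∩ Set.Icc 1 (N / p)) := by
    ext n
    simp only [Set.mem_inter_iff, Set.mem_image, Set.mem_Icc]
    constructor
    · rintro ⟨⟨m, hm, rfl⟩, h1, h2⟩
      refine ⟨m, ⟨hm, sift_pos' hp hm, ?_⟩, rfl⟩
      rw [Nat.le_div_iff_mul_le hp0]; rwa [mul_comm] at h2
    · rintro ⟨m, ⟨hm, hm1, hm2⟩, rfl⟩
      rw [Nat.le_div_iff_mul_le hp0] at hm2
      exact ⟨⟨m, hm, rfl⟩, by nlinarith, by rwa [mul_comm p m]⟩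
  have hsplit : Set.Icc 1 N
      = ((sift {p}) ∩ Set.Icc 1 N) ∪ (((p * ·) '' sift {p}) ∩ Set.Icc 1 N) := by
    rw [← Set.union_inter_distrib_right, sift_union' hp]
    ext n; simp only [Set.mem_inter_iff, Set.mem_Icc, Set.mem_setOf_eq]; omega
  have hdisj : Disjoint ((sift {p}) ∩ Set.Icc 1 N) (((p * ·) '' sift {p}) ∩ Set.Icc 1 N) :=
    (sift_disjoint' hp).mono Set.inter_subset_left Set.inter_subset_left
  have hN : (Set.Icc 1 N).ncard = N := by
    rw [← Finset.coe_Icc, Set.ncard_coe_finset, Nat.card_Icc]; omega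
  have hinj : Function.Injective (p * ·) := fun a b h => by
    simpa [Nat.mul_left_cancel_iff hp0] using h
  calc siftCount p N + siftCount p (N / p)
      = ((sift {p}) ∩ Set.Icc 1 N).ncard
        + ((p * ·) '' ((sift {p}) ∩ Set.Icc 1 (N / p))).ncard := by
        rw [siftCount, siftCount, Set.ncard_image_of_injective _ hinj]
    _ = N := by
        rw [← himg, ← Set.ncard_union_eq hdisj (siftCount_finite p N)
          ((Set.finite_Icc 1 N).inter_of_right _), ← hsplit, hN]

theorem siftCount_zero (hp : 2 ≤ p) : siftCount p 0 = 0 := by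
  have := siftCount_rec hp 0; omega

theorem siftCount_bound (hp : 2 ≤ p) (N : ℕ) :
    |(siftCount p N : ℝ) - N * (p / (p + 1))| ≤ Nat.log p N + 1 := by
  induction N using Nat.strong_induction_on with
  | _ N ih =>
    rcases Nat.eq_zero_or_pos N with rfl | hN
    · simp [siftCount_zero hp]
    have hp0 : 0 < p := by omega
    set q := N / p with hq
    have hqlt : q < N := Nat.div_lt_self hN (by omega)
    have hmod : p * q + N % p = N := Nat.div_add_mod N p
    have hrlt : N % p < p := Nat.mod_lt _ hp0
    have hp1 : ((p : ℝ) + 1) ≠ 0 := by positivity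
    have key : (siftCount p N : ℝ) = N - siftCount p q := by
      have h := siftCount_rec hp N
      have h2 : (siftCount p N : ℝ) + siftCount p q = N := by exact_mod_cast h
      linarith
    have e : (siftCount p N : ℝ) - N * (p / (p + 1))
        = (N % p : ℕ) / (p + 1) - ((siftCount p q : ℝ) - q * (p / (p + 1))) := by
      rw [key]
      have hN' : (N : ℝ) = p * q + (N % p : ℕ) := by exact_mod_cast hmod.symm
      rw [hN']; field_simp; ring
    have hr1 : ((N % p : ℕ) : ℝ) / (p + 1) ≤ 1 := by
      rw [div_le_one (by positivity)]
      have : ((N % p : ℕ) : ℝ) < p := by exact_mod_cast hrlt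
      linarith
    have hr0 : (0:ℝ) ≤ ((N % p : ℕ) : ℝ) / (p + 1) := by positivity
    rcases lt_or_ge N p with hNp | hNp
    · have hq0 : q = 0 := by rw [hq]; exact Nat.div_eq_of_lt hNp
      have hlog : Nat.log p N = 0 := Nat.log_eq_zero_iff.mpr (Or.inl hNp)
      rw [e, hq0, siftCount_zero hp, hlog]
      simp only [Nat.cast_zero, zero_mul, sub_zero]
      rw [abs_of_nonneg hr0]
      linarith
    · have hlogpos : 0 < Nat.log p N := Nat.log_pos (by omega) hNp
      have hlogq : (Nat.log p q : ℝ) + 1 = Nat.log p N := by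
        have : Nat.log p q = Nat.log p N - 1 := Nat.log_div_base p N
        have h2 : Nat.log p q + 1 = Nat.log p N := by omega
        exact_mod_cast h2
      have ihq := ih q hqlt
      calc |(siftCount p N : ℝ) - N * (p / (p + 1))|
          ≤ ((N % p : ℕ) : ℝ) / (p + 1) + |(siftCount p q : ℝ) - q * (p / (p + 1))| := by
            rw [e]; exact (abs_sub _ _).trans (by rw [abs_of_nonneg hr0])
        _ ≤ 1 + (Nat.log p q + 1) := by linarith
        _ ≤ Nat.log p N + 1 := by linarith

theorem log_div_tendsto (hp : 2 ≤ p) :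
    Tendsto (fun N : ℕ => ((Nat.log p N : ℝ) + 1) / N) atTop (nhds 0) := by
  have hlogp : (0:ℝ) < Real.log p := Real.log_pos (by exact_mod_cast hp)
  have h0 : Tendsto (fun N : ℕ => Real.log N / N) atTop (nhds 0) := by
    have := Real.isLittleO_log_id_atTop.tendsto_div_nhds_zero.comp
      (tendsto_natCast_atTop_atTop (R := ℝ))
    exact this
  have h1 : Tendsto (fun N : ℕ => (1:ℝ) / N) atTop (nhds 0) :=
    tendsto_one_div_atTop_nhds_zero_nat
  have hg : Tendsto (fun N : ℕ => (1 / Real.log p) * (Real.log N / N) + 1 / N)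
      atTop (nhds 0) := by
    have := (h0.const_mul (1 / Real.log p)).add h1
    simpa using this
  refine squeeze_zero' ?_ ?_ hg
  · filter_upwards [eventually_ge_atTop 1] with N hN
    positivity
  · filter_upwards [eventually_ge_atTop 1] with N hN
    have hN0 : (0:ℝ) < N := by exact_mod_cast hN
    have hlogle : (Nat.log p N : ℝ) ≤ Real.log N / Real.log p := by
      have hple : (p:ℝ) ^ Nat.log p N ≤ N := by
        exact_mod_cast Nat.pow_log_le_self p (by omega)
      have := Real.log_le_log (by positivity) hple
      rw [Real.log_pow] at this
      rw [le_div_iff₀ hlogp]; exact_mod_cast this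
    have e1 : 1 / Real.log ↑p * (Real.log ↑N / ↑N) = (Real.log ↑N / Real.log ↑p) / ↑N := by
      ring
    have e2 : ((Nat.log p N : ℝ) + 1) / ↑N = (Nat.log p N : ℝ) / ↑N + 1 / ↑N := by
      ring
    rw [e1, e2]
    gcongr

theorem sift_density (hp : 2 ≤ p) :
    hasDensity (sift {p}) ((p : ℝ) / (p + 1)) := by
  rw [hasDensity]
  have heq : (fun N : ℕ => (((sift {p}) ∩ Set.Icc 1 N).ncard : ℝ) / N)
      = fun N : ℕ => (siftCount p N : ℝ) / N := rfl
  rw [heq, tendsto_iff_dist_tendsto_zero]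
  simp only [Real.dist_eq]
  refine squeeze_zero' ?_ ?_ (log_div_tendsto hp)
  · filter_upwards with N using abs_nonneg _
  · filter_upwards [eventually_ge_atTop 1] with N hN
    have hN0 : (0:ℝ) < N := by exact_mod_cast hN
    have e : (siftCount p N : ℝ) / N - p / (p + 1)
        = ((siftCount p N : ℝ) - N * (p / (p + 1))) / N := by
      rw [sub_div, mul_comm, mul_div_assoc, div_self (ne_of_gt hN0), mul_one]
    rw [e, abs_div, abs_of_pos hN0]
    gcongr
    exact siftCount_bound hp N

/-- For a prime `p` and `M = sift {p}`: `M` and `pM` are disjoint with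
`M ∪ pM = ℕ+`, and `M` has natural density `p/(p+1)`. -/
theorem sift_singleton_prime_partition_density (p : ℕ) (hp : p.Prime) :
    Disjoint (sift {p}) ((p * ·) '' sift {p}) ∧
    sift {p} ∪ (p * ·) '' sift {p} = {n | 0 < n} ∧
    hasDensity (sift {p}) ((p : ℝ) / (p + 1)) := by
  exact ⟨sift_disjoint' hp.two_le, sift_union' hp.two_le, sift_density hp.two_le⟩
end
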